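/- arXiv:2101.03404 — 3 statements merged into one kernel-verified Lean document; each statement's English description precedes it below -/
import Mathlib

section
/- Let G be a profinite group and let H be a closed subgroup of G with F(G) ≤ H ≤ F₂(G). Then F(H) = F(G). -/
open scoped commutatorElement

/-- Iterated left-normed commutator: `commIter g x n = [g, x, x, ..., x]` with `n` copies of `x`. -/
def commIter {G : Type*} [Group G] (g x : G) : ℕ → G
  | 0 => g
  | n + 1 => ⁅commIter g x n, x⁆

/-- `R` is a right Engel sink of `g`. -/
def IsRightEngelSink {G : Type*} [Group G] (g : G) (R : Set G) : Prop :=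
  ∀ x : G, ∃ n₀ : ℕ, 0 < n₀ ∧ ∀ n, n₀ ≤ n → commIter g x n ∈ R

/-- `E` is a left Engel sink of `g`. -/
def IsLeftEngelSink {G : Type*} [Group G] (g : G) (E : Set G) : Prop :=
  ∀ x : G, ∃ n₀ : ℕ, 0 < n₀ ∧ ∀ n, n₀ ≤ n → commIter x g n ∈ E

/-- A group is locally nilpotent if every finitely generated subgroup is nilpotent. -/
def IsLocallyNilpotent (G : Type*) [Group G] : Prop :=
  ∀ S : Finset G, Group.IsNilpotent ↥(Subgroup.closure (S : Set G))

/-- A topological group is pronilpotent if every quotient by an open normal subgroup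
is nilpotent. -/
def IsPronilpotent (G : Type*) [Group G] [TopologicalSpace G] : Prop :=
  ∀ (N : Subgroup G) (hN : N.Normal), IsOpen (N : Set G) →
    (haveI := hN; Group.IsNilpotent (G ⧸ N))

/-- All quotients of `G` by open normal subgroups have order coprime to `k`;
this is the coprimality condition for an automorphism of order `k` of `G`. -/
def QuotientsCoprimeTo (G : Type*) [Group G] [TopologicalSpace G] (k : ℕ) : Prop :=
  ∀ N : Subgroup G, N.Normal → IsOpen (N : Set G) → Nat.Coprime N.index k

/-- `F` is the largest closed normal pronilpotent subgroup of `G`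
(the pronilpotent radical `F(G)`). -/
def IsPronilpotentRadical (G : Type*) [Group G] [TopologicalSpace G] (F : Subgroup G) : Prop :=
  IsClosed (F : Set G) ∧ F.Normal ∧ IsPronilpotent ↥F ∧
    ∀ K : Subgroup G, IsClosed (K : Set G) → K.Normal → IsPronilpotent ↥K → K ≤ F

/-- `F2` is the second term of the pronilpotent series: the preimage in `G` of the
pronilpotent radical of `G ⧸ F`. -/
def IsSecondRadical (G : Type*) [Group G] [TopologicalSpace G] (F : Subgroup G) [F.Normal]
    (F2 : Subgroup G) : Prop :=
  ∃ Fq : Subgroup (G ⧸ F), IsPronilpotentRadical (G ⧸ F) Fq ∧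
    F2 = Fq.comap (QuotientGroup.mk' F)

/-- The Frattini subgroup of a topological group: the intersection of all maximal
open subgroups. -/
def frattiniOpen (G : Type*) [Group G] [TopologicalSpace G] : Subgroup G :=
  ⨅ (M : Subgroup G) (_ : IsOpen (M : Set G) ∧ IsCoatom M), M

/-- `γ_∞(G)`: the intersection of the closures of the lower central series. -/
def gammaInf (G : Type*) [Group G] [TopologicalSpace G] [IsTopologicalGroup G] : Subgroup G :=
  ⨅ n : ℕ, (Subgroup.lowerCentralSeries (⊤ : Subgroup G) n).topologicalClosure

/-- `g` is a `p`-element: the closed subgroup it topologically generates is pro-`p`. -/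
def IsPElement {G : Type*} [Group G] [TopologicalSpace G] [IsTopologicalGroup G]
    (p : ℕ) (g : G) : Prop :=
  ∀ M : Subgroup ↥((Subgroup.closure {g}).topologicalClosure),
    M.Normal → IsOpen (M : Set ↥((Subgroup.closure {g}).topologicalClosure)) →
      ∃ k : ℕ, M.index = p ^ k

/-- `K` is the Hall `p'`-subgroup of the pronilpotent group `F`: the largest closed
subgroup normal in `F` all of whose finite quotients have order coprime to `p`. -/
def IsHallPComplement (G : Type*) [Group G] [TopologicalSpace G] (p : ℕ)
    (F K : Subgroup G) : Prop :=
  K ≤ F ∧ IsClosed (K : Set G) ∧ (K.subgroupOf F).Normal ∧ QuotientsCoprimeTo ↥K p ∧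
    ∀ K' : Subgroup G, K' ≤ F → IsClosed (K' : Set G) → (K'.subgroupOf F).Normal →
      QuotientsCoprimeTo ↥K' p → K' ≤ K

/-! Only the maximality of `F(G) ∩ H` needs work. Let `K` be a closed normal pronilpotent
subgroup of `H` and `N` an open normal subgroup of `G`. Since `F₂/F` is pronilpotent, some term
of the lower central series of `F₂` lies in `F N ≤ H N`; so the image of `H` in the finite group
`G/N` is subnormal, and the image of `K`, normal in it and nilpotent, lies in the Fitting subgroup
of `G/N`. By Fitting's theorem that subgroup is nilpotent, so the elements of `G` mapping into the
Fitting subgroup of every finite quotient form a closed normal pronilpotent subgroup, which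
therefore lies in `F(G)` and contains `K`. -/

namespace Subgroup

variable {G G' : Type*} [Group G] [Group G']

theorem commutator_le_iff_le_comap_centralizer {H K L : Subgroup G} [L.Normal] :
    ⁅H, K⁆ ≤ L ↔ H ≤ (centralizer (K.map (QuotientGroup.mk' L) : Set (G ⧸ L))).comap
      (QuotientGroup.mk' L) := by
  rw [← map_le_iff_le_comap, ← commutator_eq_bot_iff_le_centralizer, ← map_commutator,
    map_eq_bot_iff, QuotientGroup.ker_mk']

theorem iSup_commutator_le {ι : Sort*} {H : ι → Subgroup G} {K L : Subgroup G} [L.Normal]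
    (h : ∀ i, ⁅H i, K⁆ ≤ L) : ⁅⨆ i, H i, K⁆ ≤ L := by
  simp only [commutator_le_iff_le_comap_centralizer] at h ⊢
  exact iSup_le h

theorem commutator_sup_le {H K₁ K₂ L : Subgroup G} [L.Normal]
    (h₁ : ⁅H, K₁⁆ ≤ L) (h₂ : ⁅H, K₂⁆ ≤ L) : ⁅H, K₁ ⊔ K₂⁆ ≤ L := by
  rw [commutator_comm] at h₁ h₂ ⊢
  rw [commutator_le_iff_le_comap_centralizer] at h₁ h₂ ⊢
  exact sup_le h₁ h₂

theorem lowerCentralSeries_comap_le (f : G →* G') (S : Subgroup G') (n : ℕ) :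
    (S.comap f).lowerCentralSeries n ≤ (S.lowerCentralSeries n).comap f := by
  rw [← map_le_iff_le_comap, map_lowerCentralSeries]
  exact lowerCentralSeries_mono n (map_comap_le f S)

theorem normal_map_subgroupOf_map {K H : Subgroup G} (hKH : K ≤ H) (hK : (K.subgroupOf H).Normal)
    (f : G →* G') : ((K.map f).subgroupOf (H.map f)).Normal := by
  rw [normal_subgroupOf_iff_le_normalizer hKH] at hK
  rw [normal_subgroupOf_iff_le_normalizer (map_mono hKH)]
  exact (map_mono hK).trans (le_normalizer_map f)

theorem normalizer_le_normalizer_map_subtype {K : Subgroup G} (C : Subgroup K)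
    [C.Characteristic] : normalizer (K : Set G) ≤ normalizer (C.map K.subtype : Set G) := by
  rw [le_normalizer_iff_commutator_le_right, commutator_le]
  rintro g hg - ⟨c, hc, rfl⟩
  have hgc : g * K.subtype c * g⁻¹ = K.subtype (normalizerMonoidHom K ⟨g, hg⟩ c) := rfl
  rw [commutatorElement_def, hgc]
  exact mul_mem (mem_map_of_mem _ (characteristic_iff_le_comap.mp ‹_› _ hc))
    (inv_mem (mem_map_of_mem _ hc))

theorem isSubnormal_of_lowerCentralSeries_le {H W : Subgroup G} [W.Normal] (hHW : H ≤ W) {n : ℕ}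
    (hn : W.lowerCentralSeries n ≤ H) : H.IsSubnormal := by
  have key : ∀ i, (H ⊔ W.lowerCentralSeries i).IsSubnormal := by
    intro i
    induction i with
    | zero => simpa [sup_eq_right.mpr hHW] using Normal.isSubnormal inferInstance
    | succ i ih =>
      have hle := sup_le_sup_left (W.lowerCentralSeries_antitone i.le_succ) H
      refine IsSubnormal.step _ _ hle ih ((normal_subgroupOf_iff_le_normalizer hle).mpr ?_)
      refine sup_le (le_normalizer.trans normalizer_le_normalizer_sup_normal) ?_
      rw [le_normalizer_iff_commutator_le_right]
      exact (commutator_mono le_rfl (sup_le hHW (W.lowerCentralSeries_le_self _))).trans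
        le_sup_right
  simpa [sup_eq_left.mpr hn] using key n

/-- `γᵢ(A)` indexed with the convention `γ₀(A) = ⊤`, so that a commutator with `i` entries
from `A` (and any others) lies in the `i`-th term. -/
def shiftedLowerCentralSeries (A : Subgroup G) : ℕ → Subgroup G
  | 0 => ⊤
  | n + 1 => A.lowerCentralSeries n

variable {A B : Subgroup G}

instance shiftedLowerCentralSeries_normal [A.Normal] :
    ∀ i, (A.shiftedLowerCentralSeries i).Normal
  | 0 => inferInstanceAs (⊤ : Subgroup G).Normal
  | n + 1 => inferInstanceAs (A.lowerCentralSeries n).Normal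

theorem commutator_shiftedLowerCentralSeries_le [A.Normal] :
    ∀ i, ⁅A.shiftedLowerCentralSeries i, A⁆ ≤ A.shiftedLowerCentralSeries (i + 1)
  | 0 => commutator_le_right ⊤ A
  | _ + 1 => le_rfl

theorem shiftedLowerCentralSeries_eq_bot {n i : ℕ} (hn : A.lowerCentralSeries n = ⊥)
    (hi : n < i) : A.shiftedLowerCentralSeries i = ⊥ := by
  obtain ⟨i, rfl⟩ : ∃ j, i = j + 1 := ⟨i - 1, by omega⟩
  exact eq_bot_iff.mpr (hn ▸ A.lowerCentralSeries_antitone (by omega))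

variable (A B) in
/-- For normal `A` and `B`, this contains every commutator with `i` entries from `A` and `j`
from `B`, `i + j = n`. -/
def mixedLowerCentralSeries (n : ℕ) : Subgroup G :=
  ⨆ (i) (j) (_ : i + j = n), A.shiftedLowerCentralSeries i ⊓ B.shiftedLowerCentralSeries j

instance mixedLowerCentralSeries_normal [A.Normal] [B.Normal] (n : ℕ) :
    (mixedLowerCentralSeries A B n).Normal := by
  unfold mixedLowerCentralSeries; infer_instance

theorem le_mixedLowerCentralSeries {n i j : ℕ} (h : i + j = n) :
    A.shiftedLowerCentralSeries i ⊓ B.shiftedLowerCentralSeries j ≤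
      mixedLowerCentralSeries A B n :=
  le_iSup₂_of_le i j (le_iSup_of_le h le_rfl)

theorem commutator_mixedLowerCentralSeries_le [A.Normal] [B.Normal] (n : ℕ) :
    ⁅mixedLowerCentralSeries A B n, A ⊔ B⁆ ≤ mixedLowerCentralSeries A B (n + 1) := by
  refine iSup_commutator_le fun i => iSup_commutator_le fun j => iSup_commutator_le fun hij =>
    commutator_sup_le ?_ ?_
  · exact (le_inf ((commutator_mono inf_le_left le_rfl).trans
      (commutator_shiftedLowerCentralSeries_le i))
      ((commutator_le_left _ _).trans inf_le_right)).trans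
      (le_mixedLowerCentralSeries (i := i + 1) (j := j) (by omega))
  · exact (le_inf ((commutator_le_left _ _).trans inf_le_left) ((commutator_mono inf_le_right
      le_rfl).trans (commutator_shiftedLowerCentralSeries_le j))).trans
      (le_mixedLowerCentralSeries (i := i) (j := j + 1) (by omega))

theorem lowerCentralSeries_sup_le_mixedLowerCentralSeries [A.Normal] [B.Normal] (n : ℕ) :
    (A ⊔ B).lowerCentralSeries n ≤ mixedLowerCentralSeries A B (n + 1) := by
  induction n with
  | zero =>
    exact sup_le (le_mixedLowerCentralSeries (i := 1) (j := 0) rfl |>.trans' (le_inf le_rfl le_top))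
      (le_mixedLowerCentralSeries (i := 0) (j := 1) rfl |>.trans' (le_inf le_top le_rfl))
  | succ n ih =>
    exact (commutator_mono ih le_rfl).trans (commutator_mixedLowerCentralSeries_le _)

/-- **Fitting's theorem**. -/
theorem isNilpotent_sup [A.Normal] [B.Normal] (hA : Group.IsNilpotent A)
    (hB : Group.IsNilpotent B) : Group.IsNilpotent ↥(A ⊔ B) := by
  obtain ⟨a, ha⟩ := (isNilpotent_iff_lowerCentralSeries A).mp hA
  obtain ⟨b, hb⟩ := (isNilpotent_iff_lowerCentralSeries B).mp hB
  refine isNilpotent_of_lowerCentralSeries_eq_bot (n := a + b) (eq_bot_iff.mpr ?_)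
  refine (lowerCentralSeries_sup_le_mixedLowerCentralSeries _).trans
    (iSup₂_le fun i j => iSup_le fun hij => ?_)
  rcases lt_or_ge a i with hi | hi
  · exact inf_le_left.trans (shiftedLowerCentralSeries_eq_bot ha hi).le
  · exact inf_le_right.trans (shiftedLowerCentralSeries_eq_bot hb (by omega)).le

end Subgroup

open Subgroup

section FittingSubgroup

variable (G : Type*) [Group G]

def fittingSubgroup : Subgroup G :=
  sSup {N : Subgroup G | N.Normal ∧ Group.IsNilpotent N}

instance fittingSubgroup_normal : (fittingSubgroup G).Normal :=
  sSup_normal _ fun _ hN => hN.1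

variable {G}

theorem le_fittingSubgroup {N : Subgroup G} (hN : N.Normal) (hnil : Group.IsNilpotent N) :
    N ≤ fittingSubgroup G :=
  le_sSup ⟨hN, hnil⟩

theorem isNilpotent_fittingSubgroup [Finite G] : Group.IsNilpotent (fittingSubgroup G) := by
  have hsup : SupClosed {N : Subgroup G | N.Normal ∧ Group.IsNilpotent N} :=
    fun A ⟨_, hA⟩ B ⟨_, hB⟩ => ⟨sup_normal A B, isNilpotent_sup hA hB⟩
  exact (hsup.sSup_mem (Set.toFinite _) ⟨normal_bot, inferInstance⟩ le_rfl).2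

theorem fittingSubgroup_characteristic [Finite G] : (fittingSubgroup G).Characteristic :=
  characteristic_iff_map_le.mpr fun ϕ =>
    le_fittingSubgroup ((fittingSubgroup_normal G).map _ ϕ.surjective)
      (haveI := isNilpotent_fittingSubgroup (G := G)
       Group.nilpotent_of_mulEquiv (equivMapOfInjective _ _ ϕ.injective))

theorem Subgroup.IsSubnormal.le_fittingSubgroup [Finite G] {K : Subgroup G}
    (hK : K.IsSubnormal) (hnil : Group.IsNilpotent K) : K ≤ fittingSubgroup G := by
  -- Along a subnormal chain, `Fit(M)` is characteristic in `M`, hence normal in the next member.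
  suffices ∀ M : Subgroup G, M.IsSubnormal → ∀ S ≤ M, (S.subgroupOf M).Normal →
      Group.IsNilpotent S → S ≤ fittingSubgroup G from
    this K hK K le_rfl (by rw [subgroupOf_self]; infer_instance) hnil
  intro M hM
  induction hM with
  | top =>
    intro S hS hSn hnil
    rw [normal_subgroupOf_iff_le_normalizer hS, top_le_iff, normalizer_eq_top_iff] at hSn
    exact _root_.le_fittingSubgroup hSn hnil
  | step M M' hMM' _ hMn ih =>
    intro S hSM hSn hnil
    have := fittingSubgroup_characteristic (G := M)
    have hS : S ≤ (fittingSubgroup M).map M.subtype := by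
      rw [← map_subgroupOf_eq_of_le hSM]
      exact map_mono (_root_.le_fittingSubgroup hSn
        (Group.nilpotent_of_mulEquiv (subgroupOfEquivOfLe hSM).symm))
    refine hS.trans (ih _ ((map_subtype_le _).trans hMM') ?_ ?_)
    · rw [normal_subgroupOf_iff_le_normalizer ((map_subtype_le _).trans hMM')]
      exact ((normal_subgroupOf_iff_le_normalizer hMM').mp hMn).trans
        (normalizer_le_normalizer_map_subtype _)
    · have := isNilpotent_fittingSubgroup (G := M)
      exact Group.nilpotent_of_mulEquiv (equivMapOfInjective _ _ M.subtype_injective)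

end FittingSubgroup

section Pronilpotent

variable {A : Type*} [Group A] [TopologicalSpace A] {G : Type*} [Group G] [TopologicalSpace G]

theorem IsPronilpotent.of_mulEquiv (hA : IsPronilpotent A) (e : A ≃* G) (he : Continuous e) :
    IsPronilpotent G := by
  intro N hN hNo
  have := hA (N.comap e.toMonoidHom) (hN.comap _) (hNo.preimage he)
  exact Group.nilpotent_of_mulEquiv (QuotientGroup.congr (N.comap e.toMonoidHom) N e
    (map_comap_eq_self_of_surjective e.surjective N))

theorem IsPronilpotent.isNilpotent_map_range (hA : IsPronilpotent A) {f : A →* G}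
    (hf : Continuous f) {N : Subgroup G} [N.Normal] (hN : IsOpen (N : Set G)) :
    Group.IsNilpotent (f.range.map (QuotientGroup.mk' N)) := by
  set φ := (QuotientGroup.mk' N).comp f
  have hker : (φ.ker : Set A) = f ⁻¹' N := by
    ext; simp [φ, QuotientGroup.eq_one_iff]
  have := hA φ.ker inferInstance (hker ▸ hN.preimage hf)
  rw [← MonoidHom.range_comp]
  exact Group.nilpotent_of_mulEquiv (QuotientGroup.quotientKerEquivRange φ)

theorem IsPronilpotent.exists_lowerCentralSeries_le {S : Subgroup G} (hS : IsPronilpotent S)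
    {N : Subgroup G} [N.Normal] (hN : IsOpen (N : Set G)) :
    ∃ n, S.lowerCentralSeries n ≤ N := by
  have := hS.isNilpotent_map_range (f := S.subtype) continuous_subtype_val hN
  rw [range_subtype, isNilpotent_iff_lowerCentralSeries] at this
  obtain ⟨n, hn⟩ := this
  rw [← map_lowerCentralSeries, Subgroup.map_eq_bot_iff, QuotientGroup.ker_mk'] at hn
  exact ⟨n, hn⟩

theorem isPronilpotent_of_forall_isNilpotent_map [IsTopologicalGroup G] [CompactSpace G]
    [TotallyDisconnectedSpace G] {D : Subgroup G}
    (h : ∀ N : OpenNormalSubgroup G,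
      Group.IsNilpotent (D.map (QuotientGroup.mk' (N : Subgroup G)))) :
    IsPronilpotent D := by
  intro M hM hMo
  obtain ⟨V, hVo, hV⟩ := isOpen_induced_iff.mp hMo
  have h1V : (1 : G) ∈ V := by
    simpa using congrArg (1 ∈ ·) hV |>.mpr M.one_mem
  obtain ⟨N, hNV⟩ := ProfiniteGrp.exist_openNormalSubgroup_sub_open_nhds_of_one hVo h1V
  set φ := (QuotientGroup.mk' (N : Subgroup G)).comp D.subtype
  have hker : φ.ker ≤ M := fun x hx => by
    have hxN : (x : G) ∈ (N : Subgroup G) := by simpa [φ, QuotientGroup.eq_one_iff] using hx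
    exact (hV ▸ hNV hxN : x ∈ (M : Set D))
  have : Group.IsNilpotent (D ⧸ φ.ker) := by
    have := h N
    rw [← range_subtype D, ← MonoidHom.range_comp] at this
    exact Group.nilpotent_of_mulEquiv (QuotientGroup.quotientKerEquivRange φ).symm
  exact Group.nilpotent_of_surjective (QuotientGroup.map _ _ (MonoidHom.id D) hker)
    (QuotientGroup.map_surjective_of_surjective _ _ _ QuotientGroup.mk_surjective hker)

end Pronilpotent

section Radical

variable {G : Type*} [Group G] [TopologicalSpace G]

theorem IsPronilpotentRadical.le_of_forall_map_le_fittingSubgroup [IsTopologicalGroup G]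
    [CompactSpace G] [TotallyDisconnectedSpace G] {F : Subgroup G}
    (hF : IsPronilpotentRadical G F) {S : Subgroup G}
    (hS : ∀ N : OpenNormalSubgroup G,
      S.map (QuotientGroup.mk' (N : Subgroup G)) ≤ fittingSubgroup (G ⧸ (N : Subgroup G))) :
    S ≤ F := by
  set D := ⨅ N : OpenNormalSubgroup G,
    (fittingSubgroup (G ⧸ (N : Subgroup G))).comap (QuotientGroup.mk' (N : Subgroup G))
  have hD_closed : IsClosed (D : Set G) := by
    rw [coe_iInf]
    refine isClosed_iInter fun N => isClosed_of_isOpen _ (isOpen_mono ?_ N.isOpen)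
    exact (QuotientGroup.ker_mk' (N : Subgroup G)).ge.trans (MonoidHom.ker_le_comap _ _)
  have hD_normal : D.Normal := normal_iInf_normal fun N => (fittingSubgroup_normal _).comap _
  have hD_pronilpotent : IsPronilpotent D := isPronilpotent_of_forall_isNilpotent_map fun N => by
    have := isNilpotent_fittingSubgroup (G := G ⧸ (N : Subgroup G))
    exact Group.nilpotent_of_mulEquiv (subgroupOfEquivOfLe (map_le_iff_le_comap.mpr (iInf_le _ N)))
  exact (le_iInf fun N => map_le_iff_le_comap.mp (hS N)).trans
    (hF.2.2.2 D hD_closed hD_normal hD_pronilpotent)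

variable {F F2 : Subgroup G} [F.Normal]

theorem IsSecondRadical.normal (hF2 : IsSecondRadical G F F2) : F2.Normal := by
  obtain ⟨Fq, hFq, rfl⟩ := hF2
  exact hFq.2.1.comap _

theorem IsSecondRadical.exists_lowerCentralSeries_le_sup [IsTopologicalGroup G]
    (hF2 : IsSecondRadical G F F2) {N : Subgroup G} [N.Normal] (hN : IsOpen (N : Set G)) :
    ∃ n, F2.lowerCentralSeries n ≤ F ⊔ N := by
  obtain ⟨Fq, hFq, rfl⟩ := hF2
  have : (N.map (QuotientGroup.mk' F)).Normal :=
    ‹N.Normal›.map _ (QuotientGroup.mk'_surjective F)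
  obtain ⟨n, hn⟩ := hFq.2.2.1.exists_lowerCentralSeries_le
    (N := N.map (QuotientGroup.mk' F)) (QuotientGroup.isOpenMap_coe _ hN)
  refine ⟨n, (lowerCentralSeries_comap_le _ Fq n).trans ?_⟩
  rw [← QuotientGroup.comap_map_mk' F N]
  exact comap_mono hn

theorem IsSecondRadical.isSubnormal_map_mk' [IsTopologicalGroup G]
    (hF2 : IsSecondRadical G F F2) {H : Subgroup G} (hFH : F ≤ H) (hHF2 : H ≤ F2)
    {N : Subgroup G} [N.Normal] (hN : IsOpen (N : Set G)) :
    (H.map (QuotientGroup.mk' N)).IsSubnormal := by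
  obtain ⟨n, hn⟩ := hF2.exists_lowerCentralSeries_le_sup hN
  have := hF2.normal.map _ (QuotientGroup.mk'_surjective N)
  refine isSubnormal_of_lowerCentralSeries_le (map_mono hHF2) (n := n) ?_
  rw [← map_lowerCentralSeries, map_le_iff_le_comap, QuotientGroup.comap_map_mk', sup_comm]
  exact hn.trans (sup_le_sup_right hFH N)

end Radical

theorem radical_of_subgroup_between_F_and_F2_general
    (G : Type) [Group G] [TopologicalSpace G] [IsTopologicalGroup G]
    [CompactSpace G] [TotallyDisconnectedSpace G]
    (F F2 H : Subgroup G) [F.Normal]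
    (hF : IsPronilpotentRadical G F) (hF2 : IsSecondRadical G F F2)
    (hFH : F ≤ H) (hHF2 : H ≤ F2) :
    IsPronilpotentRadical ↥H (F.subgroupOf H) := by
  refine ⟨hF.1.preimage continuous_subtype_val, normal_subgroupOf,
    hF.2.2.1.of_mulEquiv (subgroupOfEquivOfLe hFH).symm
      (continuous_subtype_val.subtype_mk _ |>.subtype_mk _), fun K _ hK hKpro => ?_⟩
  rw [← comap_map_eq_self_of_injective H.subtype_injective K, comap_subtype] at hK
  rw [← comap_subtype, ← map_le_iff_le_comap]
  refine hF.le_of_forall_map_le_fittingSubgroup fun N => IsSubnormal.le_fittingSubgroup ?_ ?_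
  · exact .step _ _ (map_mono (map_subtype_le K)) (hF2.isSubnormal_map_mk' hFH hHF2 N.isOpen)
      (normal_map_subgroupOf_map (map_subtype_le K) hK _)
  · rw [← range_subtype K, ← MonoidHom.range_comp]
    exact hKpro.isNilpotent_map_range
      (continuous_subtype_val.comp continuous_subtype_val) N.isOpen

theorem radical_of_subgroup_between_F_and_F2
    (G : Type) [Group G] [TopologicalSpace G] [IsTopologicalGroup G]
    [CompactSpace G] [T2Space G] [TotallyDisconnectedSpace G]
    (F F2 H : Subgroup G) [F.Normal]
    (hF : IsPronilpotentRadical G F) (hF2 : IsSecondRadical G F F2)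
    (hH : IsClosed (H : Set G)) (hFH : F ≤ H) (hHF2 : H ≤ F2) :
    IsPronilpotentRadical ↥H (F.subgroupOf H) :=
  radical_of_subgroup_between_F_and_F2_general G F F2 H hF hF2 hFH hHF2
end

section
/- Let G be a profinite group such that γ_∞(G) is finite. Then the centralizer C_G(γ_∞(G)) is an open pronilpotent subgroup of G. -/
/-!
Since `γ_∞(G)` is a finite normal subgroup, each of its elements has finitely many conjugates, so
its centralizer `C` is open (and closed, hence compact). By compactness, every element lying in all
terms of the lower central series of a finite quotient `C ⧸ N` lifts to `γ_∞(C) ≤ γ_∞(G)`, which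
is central in `C`. So the lower central series of `C ⧸ N` stabilises at a central subgroup, and
one more step reaches `⊥`.
-/

open scoped commutatorElement

instance gammaInf_normal (G : Type*) [Group G] [TopologicalSpace G] [IsTopologicalGroup G] :
    (gammaInf G).Normal :=
  Subgroup.normal_iInf_normal fun _ => Subgroup.is_normal_topologicalClosure _

theorem map_gammaInf_le {H G : Type*} [Group H] [TopologicalSpace H] [IsTopologicalGroup H]
    [Group G] [TopologicalSpace G] [IsTopologicalGroup G] (f : H →* G) (hf : Continuous f) :
    (gammaInf H).map f ≤ gammaInf G := by
  rintro _ ⟨x, hx, rfl⟩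
  refine Subgroup.mem_iInf.2 fun n =>
    map_mem_closure hf (Subgroup.mem_iInf.1 hx n) fun y hy => ?_
  have hmap : ((⊤ : Subgroup H).lowerCentralSeries n).map f ≤
      (⊤ : Subgroup G).lowerCentralSeries n := by
    rw [Subgroup.map_lowerCentralSeries]
    exact Subgroup.lowerCentralSeries_mono n le_top
  exact hmap (Subgroup.mem_map_of_mem f hy)

theorem iInf_lowerCentralSeries_le_map_gammaInf {H Q : Type*} [Group H] [TopologicalSpace H]
    [IsTopologicalGroup H] [CompactSpace H] [Group Q] [TopologicalSpace Q] [T1Space Q]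
    (f : H →* Q) (hf : Continuous f) (hsurj : Function.Surjective f) :
    ⨅ n, (⊤ : Subgroup Q).lowerCentralSeries n ≤ (gammaInf H).map f := by
  intro q hq
  let V : ℕ → Set H := fun n => closure ((⊤ : Subgroup H).lowerCentralSeries n) ∩ f ⁻¹' {q}
  have hV_closed : ∀ n, IsClosed (V n) := fun n =>
    isClosed_closure.inter (isClosed_singleton.preimage hf)
  have hV_antitone : ∀ n, V (n + 1) ⊆ V n := fun n => Set.inter_subset_inter_left _
    (closure_mono (Subgroup.lowerCentralSeries_antitone _ n.le_succ))
  have hV_nonempty : ∀ n, (V n).Nonempty := by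
    intro n
    have hqn : q ∈ ((⊤ : Subgroup H).lowerCentralSeries n).map f := by
      rw [Subgroup.map_lowerCentralSeries, Subgroup.map_top_of_surjective f hsurj]
      exact Subgroup.mem_iInf.1 hq n
    obtain ⟨x, hx, rfl⟩ := hqn
    exact ⟨x, subset_closure hx, rfl⟩
  obtain ⟨x, hx⟩ := IsCompact.nonempty_iInter_of_sequence_nonempty_isCompact_isClosed V
    hV_antitone hV_nonempty (hV_closed 0).isCompact hV_closed
  simp only [V, Set.mem_iInter, Set.mem_inter_iff] at hx
  exact ⟨x, Subgroup.mem_iInf.2 fun n => (hx n).1, (hx 0).2⟩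

theorem Group.isNilpotent_of_iInf_lowerCentralSeries_le_center {Q : Type*} [Group Q] [Finite Q]
    (h : ⨅ n, (⊤ : Subgroup Q).lowerCentralSeries n ≤ Subgroup.center Q) :
    Group.IsNilpotent Q := by
  obtain ⟨k, hk⟩ :=
    WellFoundedLT.antitone_chain_condition (Subgroup.lowerCentralSeries_antitone (⊤ : Subgroup Q))
  have hk_le : (⊤ : Subgroup Q).lowerCentralSeries k ≤ ⨅ n, (⊤ : Subgroup Q).lowerCentralSeries n :=
    le_iInf fun n => (le_total n k).elim (fun hnk => Subgroup.lowerCentralSeries_antitone _ hnk)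
      fun hkn => (hk n hkn).le
  refine Subgroup.nilpotent_iff_lowerCentralSeries.2 ⟨k + 1, le_bot_iff.1 ?_⟩
  calc (⊤ : Subgroup Q).lowerCentralSeries (k + 1)
      = ⁅(⊤ : Subgroup Q).lowerCentralSeries k, ⊤⁆ := rfl
    _ ≤ ⁅Subgroup.center Q, ⊤⁆ := Subgroup.commutator_mono (hk_le.trans h) le_rfl
    _ = ⊥ := Subgroup.commutator_center_left ⊤

theorem isPronilpotent_of_gammaInf_le_center (H : Type*) [Group H] [TopologicalSpace H]
    [IsTopologicalGroup H] [CompactSpace H] (h : gammaInf H ≤ Subgroup.center H) :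
    IsPronilpotent H := by
  intro N hN hN_open
  have : Finite (H ⧸ N) := N.quotient_finite_of_isOpen hN_open
  have : DiscreteTopology (H ⧸ N) := QuotientGroup.discreteTopology hN_open
  refine Group.isNilpotent_of_iInf_lowerCentralSeries_le_center fun q hq => ?_
  obtain ⟨x, hx, rfl⟩ := iInf_lowerCentralSeries_le_map_gammaInf (QuotientGroup.mk' N)
    continuous_quotient_mk' (QuotientGroup.mk'_surjective N) hq
  refine Subgroup.mem_center_iff.2 fun r => ?_
  obtain ⟨y, rfl⟩ := QuotientGroup.mk'_surjective N r
  rw [← map_mul, ← map_mul, Subgroup.mem_center_iff.1 (h hx) y]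

theorem isOpen_centralizer_of_finite_of_conj_mem {G : Type*} [Group G] [TopologicalSpace G]
    [IsTopologicalGroup G] [T1Space G] {S : Set G} (hS : S.Finite)
    (hconj : ∀ x, ∀ g ∈ S, x * g * x⁻¹ ∈ S) : IsOpen (Subgroup.centralizer S : Set G) := by
  -- `x` centralizes `g ∈ S` iff `x g x⁻¹` avoids the finite, hence closed, set `S \ {g}`.
  have hC : (Subgroup.centralizer S : Set G) =
      ⋂ g ∈ S, (fun x => x * g * x⁻¹) ⁻¹' (S \ {g})ᶜ := by
    ext x
    simp only [SetLike.mem_coe, Subgroup.mem_centralizer_iff, Set.mem_iInter, Set.mem_preimage,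
      Set.mem_compl_iff, Set.mem_sdiff, Set.mem_singleton_iff, not_and, not_not]
    exact forall₂_congr fun g hg => ⟨fun h _ => by rw [← h, mul_inv_cancel_right],
      fun h => (mul_inv_eq_iff_eq_mul.1 (h (hconj x g hg))).symm⟩
  rw [hC]
  exact hS.isOpen_biInter fun g _ =>
    (hS.subset Set.sdiff_subset).isClosed.isOpen_compl.preimage (by fun_prop)

theorem centralizer_of_finite_gammaInf_open_pronilpotent_general
    (G : Type) [Group G] [TopologicalSpace G] [IsTopologicalGroup G]
    [CompactSpace G] [T2Space G]
    (hfin : (gammaInf G : Set G).Finite) :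
    IsOpen ((Subgroup.centralizer (gammaInf G : Set G) : Subgroup G) : Set G) ∧
      IsPronilpotent ↥(Subgroup.centralizer (gammaInf G : Set G)) := by
  set C := Subgroup.centralizer (gammaInf G : Set G)
  have : CompactSpace C :=
    isCompact_iff_compactSpace.1 (Set.isClosed_centralizer _).isCompact
  have hC_central : gammaInf C ≤ Subgroup.center C := fun x hx =>
    Subgroup.mem_center_iff.2 fun y => Subtype.ext (Subgroup.mem_centralizer_iff.1 y.2 x
      (map_gammaInf_le C.subtype continuous_subtype_val (Subgroup.mem_map_of_mem _ hx))).symm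
  exact ⟨isOpen_centralizer_of_finite_of_conj_mem hfin fun x g hg =>
      (gammaInf_normal G).conj_mem g hg x,
    isPronilpotent_of_gammaInf_le_center C hC_central⟩

theorem centralizer_of_finite_gammaInf_open_pronilpotent
    (G : Type) [Group G] [TopologicalSpace G] [IsTopologicalGroup G]
    [CompactSpace G] [T2Space G] [TotallyDisconnectedSpace G]
    (hfin : (gammaInf G : Set G).Finite) :
    IsOpen ((Subgroup.centralizer (gammaInf G : Set G) : Subgroup G) : Set G) ∧
      IsPronilpotent ↥(Subgroup.centralizer (gammaInf G : Set G)) :=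
  centralizer_of_finite_gammaInf_open_pronilpotent_general G hfin
end

section
/- There are functions f : ℕ → ℕ and f' : ℕ → ℕ such that the following holds: if V is a finite abelian group and U is a group of automorphisms of V with |U| coprime to |V|, and if |[V, u]| ≤ n for every u ∈ U, then |[V, U]| ≤ f(n) and |U| ≤ f'(n). -/
/-!
For `u ∈ MulAut V` the map `v ↦ v⁻¹ * u v` is a homomorphism with image `[V, u]`. When `orderOf u`
is coprime to `|V|`, an element of `[V, u]` fixed by `u` is trivial, so `C_V(u) ∩ [V, u] = 1`
and `u` is determined by its action on `[V, u]`.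

Let `A ≤ U` be abelian. Pick `a₁ ∈ A` with `|[T, a₁]|` maximal, where `T` is `A`-invariant with
`C_T(A) = 1`. Then `T₀ = C_T(a₁)` and `T₁ = [T, a₁]` are `A`-invariant with trivial intersection,
`[T₀, a a₁] = [T₀, a]`, and the fixed points of `a` and `a a₁` on `T₁` meet trivially, whence
`|[T₀, a]|² |T₁| ≤ |[T, a₁]|²` for all `a ∈ A`; induction on `T₀` gives `|T| ≤ |[T, a₁]|²`.
Applied to `T = [V, A]` (on which `C(A) = 1`, by the norm map `∏ a`) this gives
`|[V, A]| ≤ n²`, and `A` acts faithfully on `[V, A]`, so `|A| ≤ (n²)^(n²)`.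

A finite group all of whose abelian subgroups have order at most `m` has order at most
`(m! m)^m`: every prime divisor of its order is at most `m`, and in a `p`-group `G` a maximal
normal abelian subgroup `A` is self-centralizing, so conjugation `G → MulAut A` has kernel
inside `A`. With `m = (n²)^(n²)` this bounds `|U|`; finally `[V, U]` is generated by the
commuting subgroups `[V, u]`, so `|[V, U]| ≤ n^|U|`.
-/

open scoped commutatorElement

open Subgroup

section GroupLemmas

variable {G : Type*} [Group G]

theorem Subgroup.card_mul_card_le_of_disjoint {H K L : Subgroup G} [Finite L] (hHK : Disjoint H K)
    (hH : H ≤ L) (hK : K ≤ L) : Nat.card H * Nat.card K ≤ Nat.card L := by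
  rw [← Nat.card_prod]
  exact Nat.card_le_card_of_injective
    (fun p => (⟨p.1 * p.2, mul_mem (hH p.1.2) (hK p.2.2)⟩ : L))
    fun _ _ h => mul_injective_of_disjoint hHK (congrArg Subtype.val h)

theorem Subgroup.card_inf_ker_mul_card_map {G' : Type*} [Group G'] (f : G →* G')
    (T : Subgroup G) : Nat.card (f.ker ⊓ T : Subgroup G) * Nat.card (T.map f) = Nat.card T := by
  have := relIndex_inf_mul_relIndex ⊥ f.ker T
  rwa [relIndex_bot_left, relIndex_ker, bot_inf_eq, relIndex_bot_left] at this

theorem Subgroup.card_iSup_le_prod [Finite G] {ι : Type*} [Fintype ι] {H : ι → Subgroup G}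
    (hcomm : Pairwise fun i j : ι => ∀ x y : G, x ∈ H i → y ∈ H j → Commute x y) :
    Nat.card (⨆ i, H i : Subgroup G) ≤ ∏ i, Nat.card (H i) := by
  rw [← noncommPiCoprod_range (hcomm := hcomm), ← Nat.card_pi]
  exact Nat.card_le_card_of_surjective _ (noncommPiCoprod hcomm).rangeRestrict_surjective

theorem Nat.Coprime.orderOf_of_mem {k : ℕ} {H : Subgroup G} (hk : k.Coprime (Nat.card H))
    {g : G} (hg : g ∈ H) : k.Coprime (orderOf g) :=
  hk.coprime_dvd_right (H.orderOf_dvd_natCard hg)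

theorem Subgroup.normal_of_le_center {H : Subgroup G} (h : H ≤ center G) : H.Normal :=
  ⟨fun n hn g => by rwa [mem_center_iff.mp (h hn) g, mul_inv_cancel_right]⟩

end GroupLemmas

section AbelianSubgroups

variable {G : Type*} [Group G]

theorem IsPGroup.exists_ne_one_mem_center_of_normal {p : ℕ} [Fact p.Prime] [Finite G]
    (hG : IsPGroup p G) {N : Subgroup G} [N.Normal] (hN : N ≠ ⊥) :
    ∃ z ∈ N, z ≠ 1 ∧ z ∈ center G := by
  have hdvd : p ∣ Nat.card N := by
    obtain ⟨k, hk, hcard⟩ := (hG.to_subgroup N).nontrivial_iff_card.mp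
      ((nontrivial_iff_ne_bot N).mpr hN)
    exact hcard ▸ dvd_pow_self p hk.ne'
  obtain ⟨z, hz, hz1⟩ := (hG.of_equiv ConjAct.toConjAct)
    |>.exists_fixed_point_of_prime_dvd_card_of_fixed_point N hdvd (a := 1) fun g => smul_one g
  refine ⟨z, z.2, fun h => hz1 (Subtype.ext h.symm), mem_center_iff.mpr fun g => ?_⟩
  have : g * z * g⁻¹ = z := congrArg Subtype.val (hz (ConjAct.toConjAct g))
  exact mul_inv_eq_iff_eq_mul.mp this

theorem IsPGroup.centralizer_le_of_maximal {p : ℕ} [Fact p.Prime] [Finite G] (hG : IsPGroup p G)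
    {A : Subgroup G} [A.Normal] [IsMulCommutative A]
    (hmax : ∀ B : Subgroup G, B.Normal → IsMulCommutative B → A ≤ B → B ≤ A) :
    centralizer (A : Set G) ≤ A := by
  by_contra hC
  have : ((centralizer (A : Set G)).map (QuotientGroup.mk' A)).Normal :=
    Normal.map inferInstance (QuotientGroup.mk' A) (QuotientGroup.mk'_surjective A)
  obtain ⟨_, ⟨c, hc, rfl⟩, hc1, hcZ⟩ := (hG.to_quotient A).exists_ne_one_mem_center_of_normal
    (N := (centralizer (A : Set G)).map (QuotientGroup.mk' A))
    (by rwa [Ne, Subgroup.map_eq_bot_iff, QuotientGroup.ker_mk'])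
  have hBnormal : (zpowers c ⊔ A).Normal := by
    rw [← QuotientGroup.ker_mk' A, ← comap_map_eq, MonoidHom.map_zpowers]
    exact (normal_of_le_center (zpowers_le.mpr hcZ)).comap _
  have hBcomm : IsMulCommutative (zpowers c ⊔ A : Subgroup G) := by
    rw [zpowers_eq_closure, ← closure_eq A, ← Subgroup.closure_union]
    refine isMulCommutative_closure ?_
    rintro x (rfl | hx) y (rfl | hy)
    · rfl
    · exact (mem_centralizer_iff.mp hc y hy).symm
    · exact mem_centralizer_iff.mp hc x hx
    · exact setLike_mul_comm hx hy
  have hcA : c ∈ A := hmax _ hBnormal hBcomm le_sup_right (mem_sup_left (mem_zpowers c))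
  exact hc1 ((QuotientGroup.eq_one_iff c).mpr hcA)

theorem card_le_factorial_mul_of_centralizer_le [Finite G] {A : Subgroup G} [A.Normal]
    (h : centralizer (A : Set G) ≤ A) : Nat.card G ≤ (Nat.card A).factorial * Nat.card A := by
  let ψ := MulAut.conjNormal (H := A)
  have hker : ψ.ker ≤ A := fun g hg => h <| mem_centralizer_iff.mpr fun x hx => by
    have := congrArg Subtype.val (DFunLike.congr_fun hg ⟨x, hx⟩)
    rw [MulAut.conjNormal_apply] at this
    exact (mul_inv_eq_iff_eq_mul.mp this).symm
  have hrange : Nat.card ψ.range ≤ (Nat.card A).factorial :=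
    calc Nat.card ψ.range ≤ Nat.card (MulAut A) := card_le_card_group _
      _ ≤ Nat.card (Equiv.Perm A) := Nat.card_le_card_of_injective _ MulEquiv.toEquiv_injective
      _ = (Nat.card A).factorial := Nat.card_perm
  calc Nat.card G = Nat.card ψ.range * Nat.card ψ.ker := by
        rw [← index_ker, mul_comm, card_mul_index]
    _ ≤ (Nat.card A).factorial * Nat.card A := Nat.mul_le_mul hrange (card_le_of_le hker)

theorem IsPGroup.card_le_of_forall_isMulCommutative_card_le {p : ℕ} [Fact p.Prime] [Finite G]
    (hG : IsPGroup p G) {a : ℕ} (h : ∀ B : Subgroup G, IsMulCommutative B → Nat.card B ≤ a) :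
    Nat.card G ≤ a.factorial * a := by
  obtain ⟨A, ⟨hAn, hAc⟩, hmax⟩ :=
    (Set.toFinite {B : Subgroup G | B.Normal ∧ IsMulCommutative B}).exists_maximal
      ⟨⊥, inferInstance, inferInstance⟩
  calc Nat.card G ≤ (Nat.card A).factorial * Nat.card A :=
        card_le_factorial_mul_of_centralizer_le
          (hG.centralizer_le_of_maximal fun B hBn hBc hAB => hmax ⟨hBn, hBc⟩ hAB)
    _ ≤ a.factorial * a := Nat.mul_le_mul (Nat.factorial_le (h A hAc)) (h A hAc)

theorem card_le_of_forall_isMulCommutative_card_le [Finite G] {a : ℕ}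
    (h : ∀ B : Subgroup G, IsMulCommutative B → Nat.card B ≤ a) :
    Nat.card G ≤ (a.factorial * a) ^ a := by
  have ha : 1 ≤ a := card_bot (G := G) ▸ h ⊥ inferInstance
  have hprime : ∀ p ∈ (Nat.card G).primeFactors, p ≤ a := fun p hp => by
    have := Fact.mk (Nat.prime_of_mem_primeFactors hp)
    obtain ⟨x, hx⟩ := exists_prime_orderOf_dvd_card' p (Nat.dvd_of_mem_primeFactors hp)
    simpa [Nat.card_zpowers, hx] using h (zpowers x) inferInstance
  have hsylow : ∀ p ∈ (Nat.card G).primeFactors,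
      p ^ (Nat.card G).factorization p ≤ a.factorial * a := fun p hp => by
    have := Fact.mk (Nat.prime_of_mem_primeFactors hp)
    let P : Sylow p G := default
    rw [← P.card_eq_multiplicity]
    exact P.isPGroup'.card_le_of_forall_isMulCommutative_card_le fun B hB =>
      card_subtype (P : Subgroup G) B ▸ h _ inferInstance
  have hcard : (Nat.card G).primeFactors.card ≤ a := by
    simpa using Finset.card_le_card (s := (Nat.card G).primeFactors) (t := Finset.Icc 1 a)
      fun p hp => Finset.mem_Icc.mpr ⟨(Nat.prime_of_mem_primeFactors hp).one_le, hprime p hp⟩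
  calc Nat.card G = ∏ p ∈ (Nat.card G).primeFactors, p ^ (Nat.card G).factorization p :=
        Nat.prod_primeFactors_pow_factorization Nat.card_pos.ne'
    _ ≤ (a.factorial * a) ^ (Nat.card G).primeFactors.card :=
        Finset.prod_le_pow_card _ _ _ hsylow
    _ ≤ (a.factorial * a) ^ a :=
        Nat.pow_le_pow_right (Nat.mul_pos (Nat.factorial_pos a) ha) hcard

end AbelianSubgroups

namespace MulAut

variable {V : Type*} [CommGroup V]

/-- `[V, u]` is the range of this map. -/
def commutatorHom (u : MulAut V) : V →* V where
  toFun v := v⁻¹ * u v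
  map_one' := by simp
  map_mul' x y := by simp only [map_mul, mul_inv, mul_mul_mul_comm]

@[simp]
theorem commutatorHom_apply (u : MulAut V) (v : V) : u.commutatorHom v = v⁻¹ * u v := rfl

theorem mem_ker_commutatorHom {u : MulAut V} {v : V} :
    v ∈ u.commutatorHom.ker ↔ u v = v := by
  rw [MonoidHom.mem_ker, commutatorHom_apply, inv_mul_eq_one, eq_comm]

theorem closure_commutators_eq_range (u : MulAut V) :
    closure {w : V | ∃ v : V, w = v⁻¹ * u v} = u.commutatorHom.range := by
  have : {w : V | ∃ v : V, w = v⁻¹ * u v} = u.commutatorHom.range := by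
    ext; simp [eq_comm]
  rw [this, closure_eq]

theorem map_commutatorHom_le {u : MulAut V} {T : Subgroup V} (hT : ∀ x ∈ T, u x ∈ T) :
    T.map u.commutatorHom ≤ T := by
  rintro _ ⟨x, hx, rfl⟩
  exact mul_mem (inv_mem hx) (hT x hx)

theorem map_commutatorHom_mul_of_le_ker {a b : MulAut V} {T : Subgroup V}
    (hT : T ≤ b.commutatorHom.ker) : T.map (a * b).commutatorHom = T.map a.commutatorHom := by
  ext x
  refine exists_congr fun t => and_congr_right fun ht => ?_
  rw [commutatorHom_apply, commutatorHom_apply, MulAut.mul_apply,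
    mem_ker_commutatorHom.mp (hT ht)]

theorem apply_commutatorHom_of_commute {a b : MulAut V} (h : Commute a b) (v : V) :
    a (b.commutatorHom v) = b.commutatorHom (a v) := by
  simp only [commutatorHom_apply, map_mul, map_inv, ← MulAut.mul_apply, h.eq]

theorem map_commutatorHom_invariant {a b : MulAut V} (h : Commute a b) {T : Subgroup V}
    (hT : ∀ x ∈ T, a x ∈ T) : ∀ x ∈ T.map b.commutatorHom, a x ∈ T.map b.commutatorHom := by
  rintro _ ⟨t, ht, rfl⟩
  exact ⟨a t, hT t ht, (apply_commutatorHom_of_commute h t).symm⟩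

theorem ker_commutatorHom_inf_invariant {a b : MulAut V} (h : Commute a b) {T : Subgroup V}
    (hT : ∀ x ∈ T, a x ∈ T) : ∀ x ∈ b.commutatorHom.ker ⊓ T, a x ∈ b.commutatorHom.ker ⊓ T := by
  intro x hx
  obtain ⟨hxk, hxT⟩ := mem_inf.mp hx
  refine mem_inf.mpr ⟨?_, hT x hxT⟩
  rw [mem_ker_commutatorHom] at hxk ⊢
  rw [← MulAut.mul_apply, ← h.eq, MulAut.mul_apply, hxk]

theorem eq_one_of_mem_range_commutatorHom {u : MulAut V} (hu : (Nat.card V).Coprime (orderOf u))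
    {x : V} (hx : x ∈ u.commutatorHom.range) (hfix : u x = x) : x = 1 := by
  obtain ⟨v, rfl⟩ := hx
  have hpow (j : ℕ) : (u ^ j) v = v * u.commutatorHom v ^ j := by
    induction j with
    | zero => simp
    | succ j ih =>
      rw [pow_succ', MulAut.mul_apply, ih, map_mul, map_pow, hfix, pow_succ', ← mul_assoc,
        commutatorHom_apply, mul_inv_cancel_left]
  have h := hpow (orderOf u)
  rw [pow_orderOf_eq_one, MulAut.one_apply, left_eq_mul] at h
  exact hu.pow_left_bijective.injective (by simpa using h)

theorem disjoint_ker_range_commutatorHom {u : MulAut V}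
    (hu : (Nat.card V).Coprime (orderOf u)) :
    Disjoint u.commutatorHom.ker u.commutatorHom.range :=
  disjoint_def.mpr fun hk hr =>
    eq_one_of_mem_range_commutatorHom hu hr (mem_ker_commutatorHom.mp hk)

theorem eq_one_of_forall_mem_range_commutatorHom {u : MulAut V}
    (hu : (Nat.card V).Coprime (orderOf u)) (h : ∀ w ∈ u.commutatorHom.range, u w = w) :
    u = 1 := by
  ext v
  have := eq_one_of_mem_range_commutatorHom hu ⟨v, rfl⟩ (h _ ⟨v, rfl⟩)
  rwa [commutatorHom_apply, inv_mul_eq_one, eq_comm] at this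

variable [Finite V]

theorem card_mul_card_map_commutatorHom_le {a : MulAut V} {S₀ S₁ T : Subgroup V}
    (h : Disjoint S₀ S₁) (h₀ : ∀ x ∈ S₀, a x ∈ S₀) (h₁ : ∀ x ∈ S₁, a x ∈ S₁) (hS₀ : S₀ ≤ T)
    (hS₁ : S₁ ≤ T) :
    Nat.card (S₀.map a.commutatorHom) * Nat.card (S₁.map a.commutatorHom) ≤
      Nat.card (T.map a.commutatorHom) :=
  card_mul_card_le_of_disjoint (h.mono (map_commutatorHom_le h₀) (map_commutatorHom_le h₁))
    (map_mono hS₀) (map_mono hS₁)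

theorem card_le_mul_card_map_commutatorHom {a b : MulAut V} {S : Subgroup V}
    (hS : Disjoint S b.commutatorHom.ker) :
    Nat.card S ≤ Nat.card (S.map a.commutatorHom) * Nat.card (S.map (a * b).commutatorHom) := by
  have hdisj : Disjoint (a.commutatorHom.ker ⊓ S) ((a * b).commutatorHom.ker ⊓ S) := by
    refine disjoint_def.mpr fun {x} hxa hxab => disjoint_def.mp hS (mem_inf.mp hxa).2 ?_
    replace hxa := mem_ker_commutatorHom.mp (mem_inf.mp hxa).1
    replace hxab := mem_ker_commutatorHom.mp (mem_inf.mp hxab).1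
    rw [mem_ker_commutatorHom]
    exact a.injective (by rw [← MulAut.mul_apply, hxab, hxa])
  have h₁ := card_inf_ker_mul_card_map a.commutatorHom S
  have h₂ := card_inf_ker_mul_card_map (a * b).commutatorHom S
  have h₃ := card_mul_card_le_of_disjoint hdisj inf_le_right inf_le_right
  refine Nat.le_of_mul_le_mul_left ?_ (Nat.card_pos (α := S))
  calc Nat.card S * Nat.card S
      = (Nat.card (a.commutatorHom.ker ⊓ S : Subgroup V) *
          Nat.card ((a * b).commutatorHom.ker ⊓ S : Subgroup V)) *
        (Nat.card (S.map a.commutatorHom) * Nat.card (S.map (a * b).commutatorHom)) := by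
        nth_rewrite 1 [← h₁]; rw [← h₂]; ring
    _ ≤ _ := Nat.mul_le_mul_right _ h₃

theorem exists_card_le_sq_card_map_commutatorHom {A : Subgroup (MulAut V)} [IsMulCommutative A]
    (hcop : (Nat.card V).Coprime (Nat.card A)) (T : Subgroup V) (hT : ∀ a ∈ A, ∀ x ∈ T, a x ∈ T)
    (hfix : ∀ x ∈ T, (∀ a ∈ A, a x = x) → x = 1) :
    ∃ a ∈ A, Nat.card T ≤ Nat.card (T.map a.commutatorHom) ^ 2 := by
  induction T using WellFoundedLT.induction with
  | ind T ih =>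
  by_cases hbot : T = ⊥
  · exact ⟨1, A.one_mem, by simp [hbot]⟩
  obtain ⟨a₁, ha₁, hmax⟩ := Set.exists_max_image (A : Set (MulAut V))
    (fun a => Nat.card (T.map a.commutatorHom)) (Set.toFinite _) ⟨1, A.one_mem⟩
  have hcomm : ∀ a ∈ A, Commute a a₁ := fun a ha => setLike_mul_comm ha ha₁
  have hdisj₁ := disjoint_ker_range_commutatorHom (hcop.orderOf_of_mem ha₁)
  set T₀ := a₁.commutatorHom.ker ⊓ T
  set T₁ := T.map a₁.commutatorHom
  have hT₁ : T₁ ≠ ⊥ := by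
    obtain ⟨x, hxT, hx1⟩ : ∃ x ∈ T, x ≠ 1 := by
      by_contra! h
      exact hbot ((eq_bot_iff_forall T).mpr h)
    obtain ⟨a, ha, hax⟩ : ∃ a ∈ A, a x ≠ x := by
      by_contra! h
      exact hx1 (hfix x hxT h)
    have : T.map a.commutatorHom ≠ ⊥ := fun h =>
      hax (mem_ker_commutatorHom.mp ((Subgroup.map_eq_bot_iff _).mp h hxT))
    exact (one_lt_card_iff_ne_bot _).mp
      (((one_lt_card_iff_ne_bot _).mpr this).trans_le (hmax a ha))
  have hT₀ : T₀ < T := inf_lt_right.mpr fun hle => hT₁ ((Subgroup.map_eq_bot_iff _).mpr hle)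
  obtain ⟨a₂, ha₂, hT₀card⟩ := ih T₀ hT₀
    (fun a ha => ker_commutatorHom_inf_invariant (hcomm a ha) (hT a ha))
    fun x hx => hfix x (mem_inf.mp hx).2
  have hT₁card : Nat.card T₁ ≤
      Nat.card (T₁.map a₂.commutatorHom) * Nat.card (T₁.map (a₂ * a₁).commutatorHom) :=
    card_le_mul_card_map_commutatorHom (hdisj₁.symm.mono_left (map_le_range _ _))
  have hsplit : ∀ a ∈ A,
      Nat.card (T₀.map a.commutatorHom) * Nat.card (T₁.map a.commutatorHom) ≤ Nat.card T₁ :=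
    fun a ha => (card_mul_card_map_commutatorHom_le (hdisj₁.mono inf_le_left (map_le_range _ _))
      (ker_commutatorHom_inf_invariant (hcomm a ha) (hT a ha))
      (map_commutatorHom_invariant (hcomm a ha) (hT a ha)) inf_le_right
      (map_commutatorHom_le (hT a₁ ha₁))).trans (hmax a ha)
  have h₁ := hsplit a₂ ha₂
  have h₂ := hsplit (a₂ * a₁) (A.mul_mem ha₂ ha₁)
  rw [map_commutatorHom_mul_of_le_ker inf_le_left] at h₂
  refine ⟨a₁, ha₁, ?_⟩
  calc Nat.card T = Nat.card T₀ * Nat.card T₁ := (card_inf_ker_mul_card_map _ T).symm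
    _ ≤ Nat.card (T₀.map a₂.commutatorHom) ^ 2 *
        (Nat.card (T₁.map a₂.commutatorHom) * Nat.card (T₁.map (a₂ * a₁).commutatorHom)) :=
      Nat.mul_le_mul hT₀card hT₁card
    _ = (Nat.card (T₀.map a₂.commutatorHom) * Nat.card (T₁.map a₂.commutatorHom)) *
        (Nat.card (T₀.map a₂.commutatorHom) * Nat.card (T₁.map (a₂ * a₁).commutatorHom)) := by
      ring
    _ ≤ Nat.card T₁ ^ 2 := by rw [sq]; exact Nat.mul_le_mul h₁ h₂

end MulAut

namespace Subgroup

open MulAut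

variable {V : Type*} [CommGroup V]

/-- `[V, U]` -/
def autCommutator (U : Subgroup (MulAut V)) : Subgroup V :=
  ⨆ u : U, (u : MulAut V).commutatorHom.range

theorem closure_commutators_eq_autCommutator (U : Subgroup (MulAut V)) :
    closure {w : V | ∃ (u : MulAut V) (v : V), u ∈ U ∧ w = v⁻¹ * u v} = U.autCommutator := by
  have : {w : V | ∃ (u : MulAut V) (v : V), u ∈ U ∧ w = v⁻¹ * u v} =
      ⋃ u : U, {w : V | ∃ v : V, w = v⁻¹ * (u : MulAut V) v} := by
    ext; simp
  rw [this, closure_iUnion]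
  simp_rw [closure_commutators_eq_range]
  rfl

theorem range_commutatorHom_le_autCommutator {U : Subgroup (MulAut V)} {u : MulAut V}
    (hu : u ∈ U) : u.commutatorHom.range ≤ U.autCommutator :=
  le_iSup (fun w : U => (w : MulAut V).commutatorHom.range) ⟨u, hu⟩

theorem apply_mem_autCommutator {U : Subgroup (MulAut V)} {u : MulAut V} (hu : u ∈ U) {x : V}
    (hx : x ∈ U.autCommutator) : u x ∈ U.autCommutator := by
  refine iSup_induction _ (C := fun y => u y ∈ U.autCommutator) hx ?_ (by simp) ?_
  · rintro w _ ⟨v, rfl⟩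
    refine range_commutatorHom_le_autCommutator (U.mul_mem (U.mul_mem hu w.2) (U.inv_mem hu))
      ⟨u v, ?_⟩
    simp [MulAut.mul_apply]
  · intro x y hx hy
    simpa using mul_mem hx hy

theorem card_autCommutator_le [Finite V] {U : Subgroup (MulAut V)} [Finite U] {n : ℕ}
    (hn : ∀ u ∈ U, Nat.card u.commutatorHom.range ≤ n) :
    Nat.card U.autCommutator ≤ n ^ Nat.card U := by
  have := Fintype.ofFinite U
  calc Nat.card U.autCommutator ≤ ∏ u : U, Nat.card (u : MulAut V).commutatorHom.range :=
        card_iSup_le_prod fun _ _ _ x y _ _ => Commute.all x y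
    _ ≤ n ^ Nat.card U := by
        simpa using Finset.prod_le_pow_card Finset.univ _ n fun (u : U) _ => hn u u.2

theorem eq_one_of_mem_autCommutator {U : Subgroup (MulAut V)} [Finite U]
    (hcop : (Nat.card V).Coprime (Nat.card U)) {x : V} (hx : x ∈ U.autCommutator)
    (hfix : ∀ u ∈ U, u x = x) : x = 1 := by
  have := Fintype.ofFinite U
  let norm : V →* V := ∏ u : U, (u : MulAut V).toMonoidHom
  have norm_apply (v : V) : norm v = ∏ u : U, (u : MulAut V) v := by
    simp [norm]
  have hker : U.autCommutator ≤ norm.ker := by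
    refine iSup_le fun w => ?_
    rintro _ ⟨v, rfl⟩
    have : ∏ u : U, (u : MulAut V) ((w : MulAut V) v) = ∏ u : U, (u : MulAut V) v :=
      Fintype.prod_equiv (Equiv.mulRight w) _ _ fun u => rfl
    rw [MonoidHom.mem_ker, commutatorHom_apply, map_mul, map_inv, norm_apply, norm_apply, this,
      inv_mul_cancel]
  have hnorm : norm x = x ^ Nat.card U := by
    rw [norm_apply, Finset.prod_congr rfl fun (u : U) _ => hfix u u.2, Finset.prod_const,
      Finset.card_univ, Nat.card_eq_fintype_card]
  exact hcop.pow_left_bijective.injective (by rw [one_pow, ← hnorm]; exact hker hx)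

theorem eq_of_forall_mem_autCommutator_apply_eq {U : Subgroup (MulAut V)}
    (hcop : (Nat.card V).Coprime (Nat.card U)) {a b : MulAut V} (ha : a ∈ U) (hb : b ∈ U)
    (h : ∀ w ∈ U.autCommutator, a w = b w) : a = b := by
  have hc : b⁻¹ * a ∈ U := U.mul_mem (U.inv_mem hb) ha
  have := eq_one_of_forall_mem_range_commutatorHom (hcop.orderOf_of_mem hc) fun w hw => by
    rw [MulAut.mul_apply, h w (range_commutatorHom_le_autCommutator hc hw),
      MulAut.inv_apply_self]
  rwa [inv_mul_eq_one, eq_comm] at this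

theorem card_le_of_isMulCommutative_of_coprime [Finite V] (A : Subgroup (MulAut V))
    [IsMulCommutative A] (hcop : (Nat.card V).Coprime (Nat.card A)) {n : ℕ}
    (hn : ∀ a ∈ A, Nat.card a.commutatorHom.range ≤ n) :
    Nat.card A ≤ (n ^ 2) ^ (n ^ 2) := by
  set W := A.autCommutator
  obtain ⟨a₀, ha₀, hW⟩ := exists_card_le_sq_card_map_commutatorHom hcop W
    (fun a ha x hx => apply_mem_autCommutator ha hx)
    (fun x hx hfix => eq_one_of_mem_autCommutator hcop hx hfix)
  have hWn : Nat.card W ≤ n ^ 2 :=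
    hW.trans (Nat.pow_le_pow_left ((card_le_of_le (map_le_range _ _)).trans (hn a₀ ha₀)) 2)
  let act : A → W → W := fun a w => ⟨(a : MulAut V) w, apply_mem_autCommutator a.2 w.2⟩
  have hact : Function.Injective act := fun a b h => Subtype.ext <|
    eq_of_forall_mem_autCommutator_apply_eq hcop a.2 b.2 fun w hw =>
      congrArg Subtype.val (congrFun h ⟨w, hw⟩)
  calc Nat.card A ≤ Nat.card W ^ Nat.card W := by
        simpa [Nat.card_fun] using Nat.card_le_card_of_injective act hact
    _ ≤ (n ^ 2) ^ (n ^ 2) := Nat.pow_self_mono hWn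

end Subgroup

theorem bounded_commutators_coprime_action :
    ∃ f f' : ℕ → ℕ, ∀ (V : Type) [CommGroup V] [Finite V]
      (U : Subgroup (MulAut V)) (n : ℕ),
      Nat.Coprime (Nat.card V) (Nat.card ↥U) →
      (∀ u ∈ U, Nat.card ↥(Subgroup.closure {w : V | ∃ v : V, w = v⁻¹ * u v}) ≤ n) →
      Nat.card ↥(Subgroup.closure
          {w : V | ∃ (u : MulAut V) (v : V), u ∈ U ∧ w = v⁻¹ * u v}) ≤ f n ∧
        Nat.card ↥U ≤ f' n := by
  let α : ℕ → ℕ := fun n => (n ^ 2) ^ (n ^ 2)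
  refine ⟨fun n => n ^ ((α n).factorial * α n) ^ α n, fun n => ((α n).factorial * α n) ^ α n, ?_⟩
  intro V _ _ U n hcop hn
  simp only [MulAut.closure_commutators_eq_range] at hn
  have hU : Nat.card U ≤ ((α n).factorial * α n) ^ α n :=
    card_le_of_forall_isMulCommutative_card_le fun B hB => by
      rw [← card_subtype U B]
      exact card_le_of_isMulCommutative_of_coprime _
        (hcop.coprime_dvd_right (card_dvd_of_le (map_subtype_le B)))
        fun a ha => hn a (map_subtype_le B ha)
  refine ⟨?_, hU⟩
  rw [closure_commutators_eq_autCommutator]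
  exact (card_autCommutator_le hn).trans
    (Nat.pow_le_pow_right (Nat.card_pos.trans_le (hn 1 U.one_mem)) hU)
end
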